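/- arXiv:0904.1736 — 5 statements merged into one kernel-verified Lean document; each statement's English description precedes it below -/
import Mathlib

section
/- For every finite set S of positive real numbers with cardinality n, and every real number M > 1, there exists a real number R with M ≤ R ≤ M + (12(M+1))^n such that cos(R·s) ≥ 1/2 for every s ∈ S. -/
open Real

lemma cos_ge_half_of_near_int (y : ℝ) (m : ℤ) (h : |y - m| ≤ 1/6) :
    (1/2 : ℝ) ≤ Real.cos (2 * π * y) := by
  have h2 : 2 * π * y = 2 * π * (y - m) + m * (2 * π) := by ring
  rw [h2, Real.cos_add_int_mul_two_pi, ← Real.cos_abs]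
  have hpi : (0:ℝ) < π := Real.pi_pos
  have habs : |2 * π * (y - m)| ≤ π / 3 := by
    rw [abs_mul, abs_of_pos (by positivity : (0:ℝ) < 2*π)]
    nlinarith [abs_nonneg (y - (m:ℝ))]
  calc (1/2:ℝ) = Real.cos (π/3) := (Real.cos_pi_div_three).symm
    _ ≤ Real.cos |2 * π * (y - m)| :=
        Real.cos_le_cos_of_nonneg_of_le_pi (abs_nonneg _) (by linarith) habs


/-- Simultaneous-return lemma: for every finite set `S` of positive reals of
cardinality `n` and every `M > 1`, there is `R` with `M ≤ R ≤ M + (12(M+1))^n`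
such that `cos (R * s) ≥ 1/2` for every `s ∈ S`. -/
theorem stmt_0 (S : Finset ℝ) (hS : ∀ s ∈ S, 0 < s) (n : ℕ) (hn : S.card = n)
    (M : ℝ) (hM : 1 < M) :
    ∃ R : ℝ, M ≤ R ∧ R ≤ M + (12 * (M + 1)) ^ n ∧
      ∀ s ∈ S, (1 / 2 : ℝ) ≤ Real.cos (R * s) := by
  have hpi : (0:ℝ) < π := Real.pi_pos
  rcases Nat.eq_zero_or_pos n with hn0 | hnpos
  · refine ⟨M, le_refl M, by simp [hn0], ?_⟩
    intro s hs
    exfalso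
    have : S = ∅ := Finset.card_eq_zero.mp (hn ▸ hn0)
    simp [this] at hs
  -- the fractional-part map
  set x : ℝ → ℝ := fun s => M * s / (2 * π) with hx
  have hfloorlt : ∀ (k : Fin (6^n + 1)) (s : {s // s ∈ S}),
      ⌊Int.fract ((k:ℕ) * x s) * 6⌋₊ < 6 := by
    intro k s
    have h1 : Int.fract ((k:ℕ) * x s) * 6 < 6 := by
      nlinarith [Int.fract_lt_one ((k:ℕ) * x s)]
    exact (Nat.floor_lt (mul_nonneg (Int.fract_nonneg _) (by norm_num))).mpr h1
  set F : Fin (6^n + 1) → ({s // s ∈ S} → Fin 6) :=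
    fun k s => ⟨⌊Int.fract ((k:ℕ) * x s) * 6⌋₊, hfloorlt k s⟩ with hF
  have hcard : Fintype.card ({s // s ∈ S} → Fin 6) < Fintype.card (Fin (6^n + 1)) := by
    rw [Fintype.card_fun, Fintype.card_fin, Fintype.card_fin, Fintype.card_coe, hn]
    exact Nat.lt_succ_self _
  obtain ⟨a, b, hab, hfab⟩ := Fintype.exists_ne_map_eq_of_card_lt F hcard
  -- wlog a < b
  wlog hlt : (a:ℕ) < (b:ℕ) generalizing a b
  · exact this b a hab.symm hfab.symm
      (lt_of_le_of_ne (le_of_not_gt hlt) (Fin.val_ne_of_ne hab).symm)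
  set q : ℕ := (b:ℕ) - (a:ℕ) with hq
  have hq1 : 1 ≤ q := by omega
  have hq2 : q ≤ 6^n := by
    have := b.isLt; omega
  refine ⟨(q:ℝ) * M, ?_, ?_, ?_⟩
  · nlinarith [(Nat.one_le_cast (α := ℝ)).mpr hq1]
  · have hqr : (q:ℝ) ≤ 6^n := by exact_mod_cast hq2
    have hM1 : (0:ℝ) < M := by linarith
    have key : (6:ℝ)^n * M ≤ (12 * (M+1))^n := by
      have h1 : M ≤ (M+1)^n := le_trans (by linarith) (le_self_pow₀ (by linarith) (by omega))
      have h2 : (6:ℝ)^n ≤ 12^n := pow_le_pow_left₀ (by norm_num) (by norm_num) n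
      calc (6:ℝ)^n * M ≤ 12^n * (M+1)^n := by
            apply mul_le_mul h2 h1 (le_of_lt hM1) (by positivity)
        _ = (12 * (M+1))^n := (mul_pow _ _ _).symm
    nlinarith
  · intro s hs
    have hfe := congrFun hfab ⟨s, hs⟩
    have hfe' : ⌊Int.fract ((a:ℕ) * x s) * 6⌋₊ = ⌊Int.fract ((b:ℕ) * x s) * 6⌋₊ := by
      simpa [hF, Fin.ext_iff] using hfe
    set u := Int.fract ((a:ℕ) * x s) with hu
    set v := Int.fract ((b:ℕ) * x s) with hv
    have hu0 : 0 ≤ u := Int.fract_nonneg _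
    have hv0 : 0 ≤ v := Int.fract_nonneg _
    have h1 : (⌊u * 6⌋₊ : ℝ) ≤ u * 6 := Nat.floor_le (by positivity)
    have h2 : u * 6 < ⌊u * 6⌋₊ + 1 := Nat.lt_floor_add_one _
    have h3 : (⌊v * 6⌋₊ : ℝ) ≤ v * 6 := Nat.floor_le (by positivity)
    have h4 : v * 6 < ⌊v * 6⌋₊ + 1 := Nat.lt_floor_add_one _
    have hdiff : |v - u| ≤ 1/6 := by
      rw [abs_le]
      rw [hfe'] at h1 h2
      constructor <;> nlinarith
    -- integer part
    set m : ℤ := ⌊((b:ℕ):ℝ) * x s⌋ - ⌊((a:ℕ):ℝ) * x s⌋ with hm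
    have hqcast : (q:ℝ) = ((b:ℕ):ℝ) - ((a:ℕ):ℝ) := by
      rw [hq]; push_cast [Nat.cast_sub (le_of_lt hlt)]; ring
    have hnear : |(q:ℝ) * x s - m| ≤ 1/6 := by
      have : (q:ℝ) * x s - m = v - u := by
        rw [hqcast, hm, hv, hu]
        unfold Int.fract
        push_cast
        ring
      rw [this]; exact hdiff
    have hRs : (q:ℝ) * M * s = 2 * π * ((q:ℝ) * x s) := by
      rw [hx]; field_simp
    rw [hRs]
    exact cos_ge_half_of_near_int _ m hnear
end

section
/- Let p be a prime number with p ≡ 1 (mod 4), and let A be a positive integer that is not a quadratic residue modulo p (i.e., there is no integer x with x² ≡ A (mod p)). If integers y₀, y₁, y₂, y₃ satisfy y₀² − A·y₁² − p·y₂² + A·p·y₃² = 1 and y₀² ≤ 1, then y₁ = y₂ = y₃ = 0 and y₀² = 1. -/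
/-- Arithmetic core of the fact that `Γ(A,p)` contains only hyperbolic elements:
if `p` is a prime congruent to `1 mod 4`, `A` is a positive integer that is not a
quadratic residue mod `p`, and integers `y₀, y₁, y₂, y₃` satisfy
`y₀² − A y₁² − p y₂² + A p y₃² = 1` with `y₀² ≤ 1`, then `y₁ = y₂ = y₃ = 0` and `y₀² = 1`. -/
theorem stmt_1 (p : ℕ) (hp : Nat.Prime p) (hp4 : p % 4 = 1)
    (A : ℕ) (hA : 0 < A) (hAnr : ¬ ∃ x : ℤ, (p : ℤ) ∣ x ^ 2 - (A : ℤ))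
    (y₀ y₁ y₂ y₃ : ℤ)
    (h : y₀ ^ 2 - (A : ℤ) * y₁ ^ 2 - (p : ℤ) * y₂ ^ 2 + (A : ℤ) * (p : ℤ) * y₃ ^ 2 = 1)
    (hy₀ : y₀ ^ 2 ≤ 1) :
    y₁ = 0 ∧ y₂ = 0 ∧ y₃ = 0 ∧ y₀ ^ 2 = 1 := by
  haveI : Fact p.Prime := ⟨hp⟩
  have hp0 : (p : ℤ) ≠ 0 := by exact_mod_cast hp.ne_zero
  have hpz : Prime (p : ℤ) := Nat.prime_iff_prime_int.mp hp
  have hp2 : 2 ≤ p := hp.two_le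
  have hA' : ¬ IsSquare ((A : ℕ) : ZMod p) := by
    rintro ⟨c, hc⟩
    apply hAnr
    obtain ⟨x, hx⟩ := ZMod.intCast_surjective c
    refine ⟨x, ?_⟩
    have : ((x ^ 2 - (A : ℤ) : ℤ) : ZMod p) = 0 := by
      push_cast
      rw [hx, hc]; ring
    exact (ZMod.intCast_zmod_eq_zero_iff_dvd _ _).mp this
  have hpA : ¬ (p : ℤ) ∣ (A : ℤ) := by
    intro hd
    exact hAnr ⟨0, by simpa using (dvd_neg).mpr hd⟩
  have key : ∀ n : ℕ, ∀ a b c : ℤ, c.natAbs = n →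
      (A : ℤ) * a ^ 2 + (p : ℤ) * b ^ 2 = (A : ℤ) * (p : ℤ) * c ^ 2 →
      a = 0 ∧ b = 0 ∧ c = 0 := by
    intro n
    induction n using Nat.strong_induction_on with
    | _ n ih =>
      intro a b c hn heq
      by_cases hc : c = 0
      · subst hc
        have hA0 : (0 : ℤ) < (A : ℤ) := by exact_mod_cast hA
        have hP0 : (0 : ℤ) < (p : ℤ) := by exact_mod_cast hp.pos
        have ha : a = 0 := by nlinarith [sq_nonneg a, sq_nonneg b]
        have hb : b = 0 := by nlinarith [sq_nonneg a, sq_nonneg b]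
        exact ⟨ha, hb, rfl⟩
      · have hdvd1 : (p : ℤ) ∣ (A : ℤ) * a ^ 2 := ⟨(A : ℤ) * c ^ 2 - b ^ 2, by linarith⟩
        have hpa : (p : ℤ) ∣ a := by
          rcases hpz.dvd_mul.mp hdvd1 with h1 | h1
          · exact absurd h1 hpA
          · exact hpz.dvd_of_dvd_pow h1
        obtain ⟨z₁, rfl⟩ := hpa
        have heq2 : (A : ℤ) * (p : ℤ) * z₁ ^ 2 + b ^ 2 = (A : ℤ) * c ^ 2 := by
          apply mul_left_cancel₀ hp0
          linear_combination heq
        have hpc : (p : ℤ) ∣ c := by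
          by_contra hnc
          apply hA'
          have hcz : ((c : ZMod p)) ≠ 0 := by
            rw [Ne, ZMod.intCast_zmod_eq_zero_iff_dvd]
            exact hnc
          have hmod : ((b : ZMod p)) ^ 2 = ((A : ℕ) : ZMod p) * ((c : ZMod p)) ^ 2 := by
            have h2 := congrArg (Int.cast : ℤ → ZMod p) heq2
            push_cast at h2
            rw [ZMod.natCast_self] at h2
            linear_combination h2
          refine ⟨(b : ZMod p) * ((c : ZMod p))⁻¹, ?_⟩
          field_simp
          linear_combination -hmod
        obtain ⟨z₃, rfl⟩ := hpc
        have hdvd2 : (p : ℤ) ∣ b ^ 2 :=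
          ⟨(A : ℤ) * (p : ℤ) * z₃ ^ 2 - (A : ℤ) * z₁ ^ 2, by linarith⟩
        have hpb : (p : ℤ) ∣ b := hpz.dvd_of_dvd_pow hdvd2
        obtain ⟨z₂, rfl⟩ := hpb
        have heq3 : (A : ℤ) * z₁ ^ 2 + (p : ℤ) * z₂ ^ 2 = (A : ℤ) * (p : ℤ) * z₃ ^ 2 := by
          apply mul_left_cancel₀ hp0
          linear_combination heq2
        have hz3 : z₃ ≠ 0 := by
          rintro rfl; exact hc (by ring)
        have hlt : z₃.natAbs < n := by
          subst hn
          rw [Int.natAbs_mul, Int.natAbs_natCast]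
          have h1 : 1 ≤ z₃.natAbs := Int.natAbs_pos.mpr hz3
          nlinarith
        obtain ⟨e1, e2, e3⟩ := ih _ hlt z₁ z₂ z₃ rfl heq3
        subst e1; subst e2; subst e3
        exact ⟨by ring, by ring, by ring⟩
  have hb1 : -1 ≤ y₀ := by nlinarith
  have hb2 : y₀ ≤ 1 := by nlinarith
  interval_cases y₀
  · have heq : (A : ℤ) * y₁ ^ 2 + (p : ℤ) * y₂ ^ 2 = (A : ℤ) * (p : ℤ) * y₃ ^ 2 := by
      linear_combination -h
    obtain ⟨e1, e2, e3⟩ := key y₃.natAbs y₁ y₂ y₃ rfl heq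
    exact ⟨e1, e2, e3, by norm_num⟩
  · exfalso
    have hmod : ((A : ℕ) : ZMod p) * (y₁ : ZMod p) ^ 2 = -1 := by
      have h2 := congrArg (Int.cast : ℤ → ZMod p) h
      push_cast at h2
      rw [ZMod.natCast_self] at h2
      linear_combination -h2
    obtain ⟨r, hr⟩ := (ZMod.exists_sq_eq_neg_one_iff (p := p)).mpr (by omega)
    have hy1 : (y₁ : ZMod p) ≠ 0 := by
      intro h0
      rw [h0] at hmod
      norm_num at hmod
    apply hA'
    refine ⟨r * (y₁ : ZMod p)⁻¹, ?_⟩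
    field_simp
    linear_combination hmod + hr
  · have heq : (A : ℤ) * y₁ ^ 2 + (p : ℤ) * y₂ ^ 2 = (A : ℤ) * (p : ℤ) * y₃ ^ 2 := by
      linear_combination -h
    obtain ⟨e1, e2, e3⟩ := key y₃.natAbs y₁ y₂ y₃ rfl heq
    exact ⟨e1, e2, e3, by norm_num⟩
end

section
/- Let p be a prime number with p ≡ 1 (mod 4), and let A be a positive integer that is not a quadratic residue modulo p. Let Γ(A,p) be the set of real 2×2 matrices of the form [[y₀+y₁√A, y₂√p+y₃√(Ap)], [y₂√p−y₃√(Ap), y₀−y₁√A]] with y₀, y₁, y₂, y₃ ∈ ℤ and determinant 1. Then every γ ∈ Γ(A,p) with γ ≠ I and γ ≠ −I satisfies |trace(γ)| > 2. -/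
/-- If `A` has no square root mod `p` (stated via divisibility), then no element of
`ZMod p` squares to `A`. -/
lemma nsq_aux {p : ℕ} (hp : Nat.Prime p) {A : ℕ}
    (hAnr : ¬ ∃ x : ℤ, (p : ℤ) ∣ x ^ 2 - (A : ℤ)) :
    ∀ z : ZMod p, z ^ 2 ≠ (A : ZMod p) := by
  haveI := Fact.mk hp
  intro z hz
  obtain ⟨x, hx⟩ := ZMod.intCast_surjective (n := p) z
  apply hAnr
  refine ⟨x, (ZMod.intCast_zmod_eq_zero_iff_dvd _ p).mp ?_⟩
  push_cast
  rw [hx, hz]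
  ring

/-- Descent lemma: if `A` is a non-residue mod `p`, the equation
`A p a² + b² = A c²` has only the trivial solution. -/
lemma descent_aux {p A : ℕ} (hp : Nat.Prime p)
    (hA' : ∀ z : ZMod p, z ^ 2 ≠ (A : ZMod p)) :
    ∀ a b c : ℤ, (A : ℤ) * p * a ^ 2 + b ^ 2 = (A : ℤ) * c ^ 2 →
      a = 0 ∧ b = 0 ∧ c = 0 := by
  haveI := Fact.mk hp
  have hp0 : (p : ℤ) ≠ 0 := by exact_mod_cast hp.ne_zero
  have hApos : (A : ZMod p) ≠ 0 := fun h => hA' 0 (by simp [h])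
  have step : ∀ a b c : ℤ, (A : ℤ) * p * a ^ 2 + b ^ 2 = (A : ℤ) * c ^ 2 →
      ∃ a' b' c', a = p * a' ∧ b = p * b' ∧ c = p * c' ∧
        (A : ℤ) * p * a' ^ 2 + b' ^ 2 = (A : ℤ) * c' ^ 2 := by
    intro a b c h
    have hcast : ((b : ℤ) : ZMod p) ^ 2 = (A : ZMod p) * ((c : ℤ) : ZMod p) ^ 2 := by
      have := congrArg (Int.cast : ℤ → ZMod p) h
      push_cast at this
      rw [ZMod.natCast_self] at this
      linear_combination this
    have hc : (p : ℤ) ∣ c := by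
      by_contra hc
      have hcz : ((c : ℤ) : ZMod p) ≠ 0 := fun h0 =>
        hc ((ZMod.intCast_zmod_eq_zero_iff_dvd c p).mp h0)
      apply hA' (((b : ℤ) : ZMod p) * ((c : ℤ) : ZMod p)⁻¹)
      rw [mul_pow, hcast, inv_pow]
      field_simp
    have hb : (p : ℤ) ∣ b := by
      obtain ⟨c', rfl⟩ := hc
      have : ((b : ℤ) : ZMod p) ^ 2 = 0 := by
        rw [hcast]; push_cast; rw [ZMod.natCast_self]; ring
      have hb0 : ((b : ℤ) : ZMod p) = 0 := by
        exact pow_eq_zero_iff (n := 2) (by norm_num) |>.mp this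
      exact (ZMod.intCast_zmod_eq_zero_iff_dvd b p).mp hb0
    obtain ⟨c', rfl⟩ := hc
    obtain ⟨b', rfl⟩ := hb
    have h2 : (A : ℤ) * a ^ 2 + p * b' ^ 2 = (A : ℤ) * p * c' ^ 2 := by
      have : (p : ℤ) * ((A : ℤ) * a ^ 2 + p * b' ^ 2) = p * ((A : ℤ) * p * c' ^ 2) := by
        linear_combination h
      exact mul_left_cancel₀ hp0 this
    have ha : (p : ℤ) ∣ a := by
      have hcast2 : (A : ZMod p) * ((a : ℤ) : ZMod p) ^ 2 = 0 := by
        have := congrArg (Int.cast : ℤ → ZMod p) h2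
        push_cast at this
        rw [ZMod.natCast_self] at this
        linear_combination this
      have : ((a : ℤ) : ZMod p) ^ 2 = 0 := by
        rcases mul_eq_zero.mp hcast2 with h | h
        · exact absurd h hApos
        · exact h
      have ha0 : ((a : ℤ) : ZMod p) = 0 :=
        pow_eq_zero_iff (n := 2) (by norm_num) |>.mp this
      exact (ZMod.intCast_zmod_eq_zero_iff_dvd a p).mp ha0
    obtain ⟨a', rfl⟩ := ha
    refine ⟨a', b', c', rfl, rfl, rfl, ?_⟩
    have : (p : ℤ) * ((A : ℤ) * p * a' ^ 2 + b' ^ 2) = p * ((A : ℤ) * c' ^ 2) := by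
      linear_combination h2
    exact mul_left_cancel₀ hp0 this
  suffices H : ∀ n : ℕ, ∀ a b c : ℤ, a.natAbs + b.natAbs + c.natAbs ≤ n →
      (A : ℤ) * p * a ^ 2 + b ^ 2 = (A : ℤ) * c ^ 2 → a = 0 ∧ b = 0 ∧ c = 0 by
    intro a b c h
    exact H (a.natAbs + b.natAbs + c.natAbs) a b c le_rfl h
  intro n
  induction n with
  | zero => intro a b c hle _; omega
  | succ n ih =>
    intro a b c hle h
    obtain ⟨a', b', c', ha, hb, hc, h'⟩ := step a b c h
    have hp2 : 2 ≤ p := hp.two_le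
    have hna : a.natAbs = p * a'.natAbs := by
      rw [ha, Int.natAbs_mul, Int.natAbs_natCast]
    have hnb : b.natAbs = p * b'.natAbs := by
      rw [hb, Int.natAbs_mul, Int.natAbs_natCast]
    have hnc : c.natAbs = p * c'.natAbs := by
      rw [hc, Int.natAbs_mul, Int.natAbs_natCast]
    by_cases h0 : a'.natAbs + b'.natAbs + c'.natAbs = 0
    · have hz : a' = 0 ∧ b' = 0 ∧ c' = 0 := by omega
      obtain ⟨rfl, rfl, rfl⟩ := hz
      simp only [mul_zero] at ha hb hc
      exact ⟨ha, hb, hc⟩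
    · have : a'.natAbs + b'.natAbs + c'.natAbs ≤ n := by nlinarith
      obtain ⟨e1, e2, e3⟩ := ih a' b' c' this h'
      subst e1; subst e2; subst e3; simp at ha hb hc; tauto

/-- Every element of the quaternion lattice `Γ(A,p)` other than `±I` is hyperbolic:
its trace has absolute value `> 2`. Here `p ≡ 1 (mod 4)` is prime and `A` is a
positive integer which is not a quadratic residue mod `p`. -/
theorem stmt_2 (p : ℕ) (hp : Nat.Prime p) (hp4 : p % 4 = 1)
    (A : ℕ) (hA : 0 < A) (hAnr : ¬ ∃ x : ℤ, (p : ℤ) ∣ x ^ 2 - (A : ℤ))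
    (γ : Matrix (Fin 2) (Fin 2) ℝ)
    (hγ : ∃ y₀ y₁ y₂ y₃ : ℤ,
      γ = !![(y₀ : ℝ) + (y₁ : ℝ) * Real.sqrt A,
             (y₂ : ℝ) * Real.sqrt p + (y₃ : ℝ) * Real.sqrt (A * p);
             (y₂ : ℝ) * Real.sqrt p - (y₃ : ℝ) * Real.sqrt (A * p),
             (y₀ : ℝ) - (y₁ : ℝ) * Real.sqrt A] ∧ γ.det = 1)
    (h1 : γ ≠ 1) (h2 : γ ≠ -1) :
    2 < |γ.trace| := by
  haveI := Fact.mk hp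
  obtain ⟨y₀, y₁, y₂, y₃, hm, hdet⟩ := hγ
  have hA' := nsq_aux hp hAnr
  have hsA : Real.sqrt A ^ 2 = (A : ℝ) := Real.sq_sqrt (by positivity)
  have hsp : Real.sqrt p ^ 2 = (p : ℝ) := Real.sq_sqrt (by positivity)
  have hsAp : Real.sqrt (A * p) ^ 2 = (A : ℝ) * p := by
    rw [Real.sq_sqrt (by positivity)]
  -- integer determinant identity
  have hdetZ : y₀ ^ 2 - A * y₁ ^ 2 - p * y₂ ^ 2 + A * p * y₃ ^ 2 = 1 := by
    have : ((y₀ ^ 2 - A * y₁ ^ 2 - p * y₂ ^ 2 + A * p * y₃ ^ 2 : ℤ) : ℝ) = 1 := by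
      push_cast
      rw [hm, Matrix.det_fin_two_of] at hdet
      nlinarith [hdet, hsA, hsp, hsAp]
    exact_mod_cast this
  -- trace
  have htr : γ.trace = 2 * (y₀ : ℝ) := by
    rw [hm, Matrix.trace_fin_two_of]; ring
  -- it suffices to show 1 < |y₀|
  suffices hy : 1 < |y₀| by
    rw [htr, abs_mul, abs_two]
    have : (1 : ℝ) < |(y₀ : ℝ)| := by
      rw [← Int.cast_abs]
      exact_mod_cast hy
    linarith
  by_contra hy
  push_neg at hy
  -- is γ = ±1 possible from the coordinates?
  have hnot1 : ¬ (y₀ = 1 ∧ y₁ = 0 ∧ y₂ = 0 ∧ y₃ = 0) := by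
    rintro ⟨rfl, rfl, rfl, rfl⟩
    apply h1
    rw [hm, Matrix.one_fin_two]
    norm_num
  have hnotm1 : ¬ (y₀ = -1 ∧ y₁ = 0 ∧ y₂ = 0 ∧ y₃ = 0) := by
    rintro ⟨rfl, rfl, rfl, rfl⟩
    apply h2
    rw [hm, show (-1 : Matrix (Fin 2) (Fin 2) ℝ) = !![-1, 0; 0, -1] by
      rw [Matrix.one_fin_two]; ext i j; fin_cases i <;> fin_cases j <;> simp]
    norm_num
  have hApos : (A : ZMod p) ≠ 0 := fun h => hA' 0 (by simp [h])
  obtain ⟨hl, hr⟩ := abs_le.mp hy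
  interval_cases y₀
  · -- y₀ = -1 : A y₁² + p y₂² = A p y₃²
    have heq : (A : ℤ) * y₁ ^ 2 + p * y₂ ^ 2 = (A : ℤ) * p * y₃ ^ 2 := by linarith
    -- first, p ∣ y₁
    have hy1 : (p : ℤ) ∣ y₁ := by
      have hcast : (A : ZMod p) * ((y₁ : ℤ) : ZMod p) ^ 2 = 0 := by
        have := congrArg (Int.cast : ℤ → ZMod p) heq
        push_cast at this
        rw [ZMod.natCast_self] at this
        linear_combination this
      have : ((y₁ : ℤ) : ZMod p) ^ 2 = 0 := by
        rcases mul_eq_zero.mp hcast with h | h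
        · exact absurd h hApos
        · exact h
      exact (ZMod.intCast_zmod_eq_zero_iff_dvd y₁ p).mp
        (pow_eq_zero_iff (n := 2) (by norm_num) |>.mp this)
    obtain ⟨a, rfl⟩ := hy1
    have hp0 : (p : ℤ) ≠ 0 := by exact_mod_cast hp.ne_zero
    have heq2 : (A : ℤ) * p * a ^ 2 + y₂ ^ 2 = (A : ℤ) * y₃ ^ 2 := by
      have : (p : ℤ) * ((A : ℤ) * p * a ^ 2 + y₂ ^ 2) = p * ((A : ℤ) * y₃ ^ 2) := by
        linear_combination heq
      exact mul_left_cancel₀ hp0 this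
    obtain ⟨e1, e2, e3⟩ := descent_aux hp hA' a y₂ y₃ heq2
    exact hnotm1 ⟨rfl, by rw [e1]; ring, e2, e3⟩
  · -- y₀ = 0 : -A y₁² - p y₂² + A p y₃² = 1, contradiction mod p with p ≡ 1 mod 4
    have heq : -(A : ℤ) * y₁ ^ 2 - p * y₂ ^ 2 + (A : ℤ) * p * y₃ ^ 2 = 1 := by linarith
    have hcast : -(A : ZMod p) * ((y₁ : ℤ) : ZMod p) ^ 2 = 1 := by
      have := congrArg (Int.cast : ℤ → ZMod p) heq
      push_cast at this
      rw [ZMod.natCast_self] at this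
      linear_combination this
    obtain ⟨i, hi⟩ : ∃ i : ZMod p, i ^ 2 = -1 := by
      obtain ⟨i, hi⟩ := (ZMod.exists_sq_eq_neg_one_iff (p := p)).mpr (by omega)
      exact ⟨i, by rw [sq]; exact hi.symm⟩
    have hy1z : ((y₁ : ℤ) : ZMod p) ≠ 0 := by
      intro h0
      rw [h0] at hcast
      simp at hcast
    apply hA' (i * ((y₁ : ℤ) : ZMod p)⁻¹)
    have hy1sq : ((y₁ : ℤ) : ZMod p) ^ 2 ≠ 0 := pow_ne_zero _ hy1z
    rw [mul_pow, hi, inv_pow]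
    have : (A : ZMod p) = -(((y₁ : ℤ) : ZMod p) ^ 2)⁻¹ := by
      field_simp
      linear_combination -hcast
    rw [this]
    ring
  · -- y₀ = 1
    have heq : (A : ℤ) * y₁ ^ 2 + p * y₂ ^ 2 = (A : ℤ) * p * y₃ ^ 2 := by linarith
    have hy1 : (p : ℤ) ∣ y₁ := by
      have hcast : (A : ZMod p) * ((y₁ : ℤ) : ZMod p) ^ 2 = 0 := by
        have := congrArg (Int.cast : ℤ → ZMod p) heq
        push_cast at this
        rw [ZMod.natCast_self] at this
        linear_combination this
      have : ((y₁ : ℤ) : ZMod p) ^ 2 = 0 := by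
        rcases mul_eq_zero.mp hcast with h | h
        · exact absurd h hApos
        · exact h
      exact (ZMod.intCast_zmod_eq_zero_iff_dvd y₁ p).mp
        (pow_eq_zero_iff (n := 2) (by norm_num) |>.mp this)
    obtain ⟨a, rfl⟩ := hy1
    have hp0 : (p : ℤ) ≠ 0 := by exact_mod_cast hp.ne_zero
    have heq2 : (A : ℤ) * p * a ^ 2 + y₂ ^ 2 = (A : ℤ) * y₃ ^ 2 := by
      have : (p : ℤ) * ((A : ℤ) * p * a ^ 2 + y₂ ^ 2) = p * ((A : ℤ) * y₃ ^ 2) := by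
        linear_combination heq
      exact mul_left_cancel₀ hp0 this
    obtain ⟨e1, e2, e3⟩ := descent_aux hp hA' a y₂ y₃ heq2
    exact hnot1 ⟨rfl, by rw [e1]; ring, e2, e3⟩
end

section
/- For every integer m ≥ 1, define x_m = 2m² − 1 + 2m·√(m² − 1). Then for all integers m > k ≥ 1, log x_m − log x_k ≥ (m − k)/√(x_m). -/
private noncomputable def sfun (n : ℕ) : ℝ := (n : ℝ) + Real.sqrt ((n : ℝ) ^ 2 - 1)

private lemma sfun_nonneg (n : ℕ) : 0 ≤ sfun n := by
  unfold sfun; positivity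

private lemma sfun_ge_one {n : ℕ} (hn : 1 ≤ n) : 1 ≤ sfun n := by
  unfold sfun
  have : (1 : ℝ) ≤ (n : ℝ) := by exact_mod_cast hn
  nlinarith [Real.sqrt_nonneg ((n : ℝ) ^ 2 - 1)]

private lemma sfun_mono {k m : ℕ} (h : k ≤ m) : sfun k ≤ sfun m := by
  unfold sfun
  have hk : (k : ℝ) ≤ (m : ℝ) := by exact_mod_cast h
  have := Real.sqrt_le_sqrt (show (k : ℝ) ^ 2 - 1 ≤ (m : ℝ) ^ 2 - 1 by nlinarith [Nat.cast_nonneg (α := ℝ) k])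
  linarith

private lemma sfun_le {n : ℕ} : sfun n ≤ 2 * (n : ℝ) := by
  unfold sfun
  have h1 : Real.sqrt ((n : ℝ) ^ 2 - 1) ≤ Real.sqrt ((n : ℝ) ^ 2) :=
    Real.sqrt_le_sqrt (by linarith)
  have h2 : Real.sqrt ((n : ℝ) ^ 2) = (n : ℝ) := by
    rw [Real.sqrt_sq (Nat.cast_nonneg n)]
  linarith

/-- Spacing estimate for the arithmetic length spectrum: with
`x_m = 2m² − 1 + 2m√(m² − 1)`, for all integers `m > k ≥ 1` one has
`log x_m − log x_k ≥ (m − k)/√(x_m)`. -/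
theorem stmt_14 (x : ℕ → ℝ)
    (hx : ∀ m : ℕ, x m = 2 * (m : ℝ) ^ 2 - 1 + 2 * (m : ℝ) * Real.sqrt ((m : ℝ) ^ 2 - 1)) :
    ∀ m k : ℕ, 1 ≤ k → k < m →
      Real.log (x m) - Real.log (x k) ≥ ((m : ℝ) - (k : ℝ)) / Real.sqrt (x m) := by
  -- x n = (sfun n)^2 for n ≥ 1
  have hxs : ∀ n : ℕ, 1 ≤ n → x n = (sfun n) ^ 2 := by
    intro n hn
    have h1 : (1 : ℝ) ≤ (n : ℝ) := by exact_mod_cast hn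
    have hnn : (0 : ℝ) ≤ (n : ℝ) ^ 2 - 1 := by nlinarith
    have hsq : Real.sqrt ((n : ℝ) ^ 2 - 1) ^ 2 = (n : ℝ) ^ 2 - 1 := Real.sq_sqrt hnn
    rw [hx n]; unfold sfun; nlinarith
  have hx1 : ∀ n : ℕ, 1 ≤ n → 1 ≤ x n := by
    intro n hn
    rw [hxs n hn]
    nlinarith [sfun_ge_one hn]
  have hsqrt : ∀ n : ℕ, 1 ≤ n → Real.sqrt (x n) = sfun n := by
    intro n hn
    rw [hxs n hn, Real.sqrt_sq (sfun_nonneg n)]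
  -- difference bound: x (j+1) - x j ≥ 2*(j+1)
  have hdiff : ∀ j : ℕ, 1 ≤ j → 2 * ((j : ℝ) + 1) ≤ x (j + 1) - x j := by
    intro j hj
    rw [hx (j + 1), hx j]
    push_cast
    have h1 : (1 : ℝ) ≤ (j : ℝ) := by exact_mod_cast hj
    have hs1 : Real.sqrt ((j : ℝ) ^ 2 - 1) ≤ Real.sqrt (((j : ℝ) + 1) ^ 2 - 1) :=
      Real.sqrt_le_sqrt (by nlinarith)
    have hs0 : 0 ≤ Real.sqrt ((j : ℝ) ^ 2 - 1) := Real.sqrt_nonneg _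
    nlinarith
  -- step: log x (j+1) - log x j ≥ 1 / sqrt (x (j+1))
  have hstep : ∀ j : ℕ, 1 ≤ j →
      1 / Real.sqrt (x (j + 1)) ≤ Real.log (x (j + 1)) - Real.log (x j) := by
    intro j hj
    have hj1 : (1 : ℕ) ≤ j + 1 := by omega
    have ha : (1 : ℝ) ≤ x (j + 1) := hx1 _ hj1
    have hb : (1 : ℝ) ≤ x j := hx1 _ hj
    have hapos : (0 : ℝ) < x (j + 1) := by linarith
    have hbpos : (0 : ℝ) < x j := by linarith
    -- log (x j / x (j+1)) ≤ x j / x (j+1) - 1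
    have hlog : Real.log (x j / x (j + 1)) ≤ x j / x (j + 1) - 1 :=
      Real.log_le_sub_one_of_pos (by positivity)
    rw [Real.log_div (ne_of_gt hbpos) (ne_of_gt hapos)] at hlog
    -- so log a - log b ≥ (a - b)/a
    have key : (x (j + 1) - x j) / x (j + 1) ≤ Real.log (x (j + 1)) - Real.log (x j) := by
      have h : (x (j + 1) - x j) / x (j + 1) = 1 - x j / x (j + 1) := by
        field_simp
      rw [h]; linarith
    refine le_trans ?_ key
    -- 1/sqrt a ≤ (a - b)/a
    have hsa : Real.sqrt (x (j + 1)) = sfun (j + 1) := hsqrt _ hj1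
    have hsle : sfun (j + 1) ≤ 2 * ((j : ℝ) + 1) := by
      have := sfun_le (n := j + 1); push_cast at this ⊢; linarith
    have hs1 : 1 ≤ sfun (j + 1) := sfun_ge_one hj1
    have hxa : x (j + 1) = sfun (j + 1) ^ 2 := hxs _ hj1
    have hd := hdiff j hj
    rw [hsa, div_le_div_iff₀ (by linarith) hapos, one_mul, hxa]
    nlinarith
  -- main induction
  intro m
  induction m with
  | zero => intro k hk hkm; omega
  | succ j ih =>
    intro k hk hkm
    have hj1 : (1:ℕ) ≤ j + 1 := by omega
    rcases Nat.lt_succ_iff_lt_or_eq.mp hkm with h | h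
    · have hjk : 1 ≤ j := by omega
      have h1 := ih k hk h
      have h2 := hstep j hjk
      have hmono : Real.sqrt (x j) ≤ Real.sqrt (x (j + 1)) := by
        rw [hsqrt j hjk, hsqrt (j + 1) hj1]; exact sfun_mono (by omega)
      have hspos : 0 < Real.sqrt (x j) := by
        rw [hsqrt j hjk]; linarith [sfun_ge_one hjk]
      have hspos' : 0 < Real.sqrt (x (j + 1)) := lt_of_lt_of_le hspos hmono
      have hcast : ((j : ℝ) - (k : ℝ)) ≥ 0 := by
        have : (k : ℝ) ≤ (j : ℝ) := by exact_mod_cast le_of_lt h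
        linarith
      have h3 : ((j : ℝ) - (k : ℝ)) / Real.sqrt (x (j + 1)) ≤ ((j : ℝ) - (k : ℝ)) / Real.sqrt (x j) :=
        div_le_div_of_nonneg_left hcast hspos hmono
      have h4 : (((j : ℕ) + 1 : ℕ) : ℝ) - (k : ℝ) = ((j : ℝ) - (k : ℝ)) + 1 := by push_cast; ring
      rw [ge_iff_le, h4, add_div]
      calc ((j : ℝ) - (k : ℝ)) / Real.sqrt (x (j + 1)) + 1 / Real.sqrt (x (j + 1))
          ≤ ((j : ℝ) - (k : ℝ)) / Real.sqrt (x j) + (Real.log (x (j + 1)) - Real.log (x j)) := by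
            exact add_le_add h3 h2
        _ ≤ (Real.log (x j) - Real.log (x k)) + (Real.log (x (j + 1)) - Real.log (x j)) := by
            linarith [h1]
        _ = Real.log (x (j + 1)) - Real.log (x k) := by ring
    · subst h
      have h2 := hstep k hk
      have h4 : (((k : ℕ) + 1 : ℕ) : ℝ) - (k : ℝ) = 1 := by push_cast; ring
      rw [ge_iff_le, h4]
      exact h2
end

section
/- Let x, y, N, c, Θ be real numbers with N ≥ 0, c ≥ 0 and Θ ≥ 0. Suppose that N − c²Θ² ≤ 1/4 + x² − y² and |x·y| ≤ c·Θ·√N. Then y² ≤ 1/4 + 5·c²·Θ². -/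
/-- Elementary inequality behind the a priori bound `|Im r_j| ≤ cΘ`: if
`N, c, Θ ≥ 0`, `N − c²Θ² ≤ 1/4 + x² − y²` and `|xy| ≤ cΘ√N`, then
`y² ≤ 1/4 + 5c²Θ²`. -/
theorem stmt_18 (x y N c Θ : ℝ) (hN : 0 ≤ N) (hc : 0 ≤ c) (hΘ : 0 ≤ Θ)
    (h1 : N - c ^ 2 * Θ ^ 2 ≤ 1 / 4 + x ^ 2 - y ^ 2)
    (h2 : |x * y| ≤ c * Θ * Real.sqrt N) :
    y ^ 2 ≤ 1 / 4 + 5 * c ^ 2 * Θ ^ 2 := by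
  have hsq : (x * y) ^ 2 ≤ (c * Θ) ^ 2 * N := by
    have := Real.sq_sqrt hN
    nlinarith [abs_nonneg (x * y), sq_abs (x * y), Real.sqrt_nonneg N,
      mul_nonneg (mul_nonneg hc hΘ) (Real.sqrt_nonneg N)]
  rcases le_or_gt (x ^ 2) (N / 4) with h | h
  · nlinarith
  · nlinarith [sq_nonneg y, sq_nonneg (c * Θ), sq_nonneg x,
      mul_le_mul_of_nonneg_left h1 (le_of_lt (by nlinarith : (0:ℝ) < x ^ 2))]
end
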